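/- Let G be a finite simple graph, let k, ℓ be natural numbers, and let X, Y be disjoint vertex sets of G such that every neighbor of a vertex of Y lies in X (N(Y) ⊆ X) and such that |N(X′) ∩ Y| ≥ |X′| + ℓ for every non-empty subset X′ ⊆ X. Then G has a vertex set S with |S| ≤ k such that G − S has at most ℓ edges if and only if the graph G − (X ∪ Y) has a vertex set S′ with |S′| ≤ k − |X| such that (G − (X ∪ Y)) − S′ has at most ℓ edges. -/

import Mathlib

/-- The graph obtained from `G` by deleting the vertices in `S`. -/
def SimpleGraph.delVerts {V : Type*} (G : SimpleGraph V) (S : Set V) : SimpleGraph V where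
  Adj a b := G.Adj a b ∧ a ∉ S ∧ b ∉ S
  symm := ⟨fun _ _ h => ⟨h.1.symm, h.2.2, h.2.1⟩⟩
  loopless := ⟨fun a h => G.loopless.irrefl a h.1⟩

/-!
Let `S` be a solution for `G`. The vertices of `X \ S` have at least `|X \ S| + ℓ` neighbours
in `Y`, and each such neighbour outside `S` gives its own edge of `G - S`; as `G - S` has at
most `ℓ` edges, `S` contains at least `|X \ S|` vertices of `Y`. Hence replacing `S ∩ (X ∪ Y)`
by `X` does not enlarge `S`, so `S \ (X ∪ Y)` solves `G - (X ∪ Y)` with budget `k - |X|`.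
Conversely, since `N(Y) ⊆ X`, deleting `X` isolates `Y`, so for a solution `S'` of
`G - (X ∪ Y)` the set `S' ∪ X` solves `G`.
-/

namespace SimpleGraph

variable {V : Type*} (G : SimpleGraph V)

@[simp]
lemma delVerts_adj {S : Set V} {a b : V} :
    (G.delVerts S).Adj a b ↔ G.Adj a b ∧ a ∉ S ∧ b ∉ S := Iff.rfl

lemma delVerts_delVerts (S T : Set V) : (G.delVerts S).delVerts T = G.delVerts (S ∪ T) := by
  ext a b
  simp only [delVerts_adj, Set.mem_union, not_or]
  tauto

lemma delVerts_anti {S T : Set V} (h : S ⊆ T) : G.delVerts T ≤ G.delVerts S :=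
  fun _ _ hab => ⟨hab.1, fun ha => hab.2.1 (h ha), fun hb => hab.2.2 (h hb)⟩

lemma delVerts_union_of_neighbor_mem {A B : Set V}
    (hB : ∀ b ∈ B, ∀ v, G.Adj b v → v ∈ A) : G.delVerts (A ∪ B) = G.delVerts A := by
  ext a b
  simp only [delVerts_adj, Set.mem_union, not_or]
  constructor
  · tauto
  · rintro ⟨hab, ha, hb⟩
    exact ⟨hab, ⟨ha, fun haB => hb (hB a haB b hab)⟩,
      hb, fun hbB => ha (hB b hbB a hab.symm)⟩

lemma edgeSet_ncard_mono [Finite V] {H : SimpleGraph V} (h : G ≤ H) :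
    G.edgeSet.ncard ≤ H.edgeSet.ncard :=
  Set.ncard_le_ncard (edgeSet_mono h)

/-- Matching each `y ∈ B` with an edge to a chosen neighbour in `A` is injective because `A` and
`B` are disjoint. -/
lemma card_le_edgeSet_ncard_delVerts [Finite V] {A B : Finset V} {S : Set V}
    (hAB : Disjoint A B) (hA : Disjoint (A : Set V) S) (hB : Disjoint (B : Set V) S)
    (hadj : ∀ y ∈ B, ∃ x ∈ A, G.Adj x y) : B.card ≤ (G.delVerts S).edgeSet.ncard := by
  choose! f hfA hf using hadj
  rw [← Set.ncard_coe_finset]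
  refine Set.ncard_le_ncard_of_injOn (fun y => s(f y, y)) ?_ ?_
  · intro y hy
    exact ⟨hf y hy, Set.disjoint_left.mp hA (hfA y hy), Set.disjoint_left.mp hB hy⟩
  · intro y₁ hy₁ y₂ hy₂ heq
    rcases Sym2.eq_iff.mp heq with ⟨-, h⟩ | ⟨-, h⟩
    · exact h
    · exact absurd (h ▸ hfA y₂ hy₂) (Finset.disjoint_right.mp hAB hy₁)

lemma card_sdiff_le_card_inter_of_expansion [Finite V] [DecidableEq V] [DecidableRel G.Adj]
    {X Y S : Finset V} {ℓ : ℕ} (hXY : Disjoint X Y)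
    (hexp : ∀ X' ⊆ X, X'.Nonempty →
      X'.card + ℓ ≤ (Y.filter (fun y => ∃ x ∈ X', G.Adj x y)).card)
    (hS : (G.delVerts S).edgeSet.ncard ≤ ℓ) : (X \ S).card ≤ (S ∩ Y).card := by
  rcases (X \ S).eq_empty_or_nonempty with hempty | hne
  · simp [hempty]
  set T := Y.filter (fun y => ∃ x ∈ X \ S, G.Adj x y)
  have hT : (X \ S).card + ℓ ≤ T.card := hexp _ Finset.sdiff_subset hne
  have hTS : (T \ S).card ≤ ℓ := by
    refine le_trans (G.card_le_edgeSet_ncard_delVerts (A := X \ S) ?_ ?_ ?_ ?_) hS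
    · exact hXY.mono Finset.sdiff_subset (Finset.sdiff_subset.trans (Finset.filter_subset _ _))
    · simp [Set.disjoint_left]
    · simp [Set.disjoint_left]
    · intro y hy
      exact (Finset.mem_filter.mp (Finset.mem_sdiff.mp hy).1).2
  have hTinter : (T ∩ S).card ≤ (S ∩ Y).card := by
    rw [Finset.inter_comm]
    exact Finset.card_le_card (Finset.inter_subset_inter_left (Finset.filter_subset _ _))
  have hTsplit := Finset.card_sdiff_add_card_inter T S
  omega

end SimpleGraph

lemma Finset.card_sdiff_union_add_card_le {V : Type*} [DecidableEq V] {X Y S : Finset V}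
    (hXY : Disjoint X Y) (h : (X \ S).card ≤ (S ∩ Y).card) :
    (S \ (X ∪ Y)).card + X.card ≤ S.card := by
  have hsplit : (S ∩ (X ∪ Y)).card = (S ∩ X).card + (S ∩ Y).card := by
    rw [Finset.inter_union_distrib_left, Finset.card_union_of_disjoint]
    exact hXY.mono Finset.inter_subset_right Finset.inter_subset_right
  have hSsplit := Finset.card_sdiff_add_card_inter S (X ∪ Y)
  have hXsplit := Finset.card_sdiff_add_card_inter X S
  rw [Finset.inter_comm X S] at hXsplit
  omega

/-- Safeness of removing an `ℓ`-additive expansion from `X` into `Y` (where `N(Y) ⊆ X` and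
`|N(X') ∩ Y| ≥ |X'| + ℓ` for every non-empty `X' ⊆ X`):
`G` has a set `S` of at most `k` vertices whose deletion leaves at most `ℓ` edges
iff `G - (X ∪ Y)` has such a set `S'` of at most `k - |X|` vertices. -/
theorem additive_expansion_rule_safe {V : Type*} [Fintype V] [DecidableEq V]
    (G : SimpleGraph V) [DecidableRel G.Adj] (k ℓ : ℕ) (X Y : Finset V) (hXY : Disjoint X Y)
    (hNY : ∀ y ∈ Y, ∀ v : V, G.Adj y v → v ∈ X)
    (hexp : ∀ X' ⊆ X, X'.Nonempty →
      X'.card + ℓ ≤ (Y.filter (fun y => ∃ x ∈ X', G.Adj x y)).card) :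
    (∃ S : Finset V, S.card ≤ k ∧ (G.delVerts ↑S).edgeSet.ncard ≤ ℓ) ↔
    (∃ S' : Finset V, Disjoint S' (X ∪ Y) ∧ (S'.card : ℤ) ≤ (k : ℤ) - X.card ∧
      ((G.delVerts ↑(X ∪ Y)).delVerts ↑S').edgeSet.ncard ≤ ℓ) := by
  constructor
  · rintro ⟨S, hSk, hSe⟩
    have hcard := Finset.card_sdiff_union_add_card_le hXY
      (G.card_sdiff_le_card_inter_of_expansion hXY hexp hSe)
    refine ⟨S \ (X ∪ Y), Finset.sdiff_disjoint, by omega,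
      (SimpleGraph.edgeSet_ncard_mono _ ?_).trans hSe⟩
    rw [SimpleGraph.delVerts_delVerts]
    exact G.delVerts_anti (by push_cast; rw [Set.union_sdiff_self]; exact Set.subset_union_right)
  · rintro ⟨S', -, hS'k, hS'e⟩
    have hcard := Finset.card_union_le S' X
    refine ⟨S' ∪ X, by omega, ?_⟩
    have hdel : (G.delVerts ↑(X ∪ Y)).delVerts ↑S' = G.delVerts ↑(S' ∪ X) := by
      rw [SimpleGraph.delVerts_delVerts,
        ← G.delVerts_union_of_neighbor_mem (A := ↑(S' ∪ X)) (B := ↑Y)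
          fun y hy v hv => by simpa using Or.inr (hNY y hy v hv)]
      congr 1
      push_cast
      ac_rfl
    rwa [← hdel]
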